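/- If H commutes with the total number operator N = n₁+n₂+n₃+n₄, then conjugation by e^{-iθ(ñ₁+ñ₂)} equals conjugation by U_x(θ/2): e^{iθ(ñ₁+ñ₂)} H e^{-iθ(ñ₁+ñ₂)} = U_x(θ/2) H U_x(−θ/2), where U_x(φ) = exp(iφ(a₁†a₃+a₃†a₁)) exp(iφ(a₂†a₄+a₄†a₂)) and ñ₁+ñ₂ = (N + a₁†a₃+a₃†a₁ + a₂†a₄+a₄†a₂)/2. -/

import Mathlib

/-!
A hopping term `a_i† a_j` raises the occupation of mode `i` and lowers that of mode `j`, so it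
commutes with the total number operator `N`; hoppings on disjoint pairs of modes commute with each
other. Hence `exp(iθM)` factors as `exp(iθN/2) exp(iθS₁₃/2) exp(iθS₂₄/2)`, and since `H` commutes
with `N`, the factor `exp(iθN/2)` cancels in the conjugation of `H`.
-/

open NormedSpace

theorem commute_mul_left_of_anticommute {R : Type*} [Ring R] {x y u : R}
    (hx : x * u = -(u * x)) (hy : y * u = -(u * y)) : Commute (x * y) u := by
  rw [Commute, SemiconjBy, mul_assoc, hy, mul_neg, ← mul_assoc, hx, neg_mul, neg_neg, mul_assoc]

theorem exp_add_mul_mul_exp_neg_add_of_commute {𝔸 : Type*} [NormedRing 𝔸] [NormedAlgebra ℚ 𝔸]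
    [CompleteSpace 𝔸] {x y h : 𝔸} (hxy : Commute x y) (hx : Commute h x) :
    exp (x + y) * h * exp (-(x + y)) = exp y * h * exp (-y) := by
  have hconj : exp x * h * exp (-x) = h := by
    simpa using hx.neg_right.exp_neg_mul_mul_exp_eq_self
  rw [add_comm, exp_add_of_commute hxy.symm, neg_add_rev, exp_add_of_commute hxy.neg_left.neg_right,
    ← mul_assoc, mul_assoc (exp y), mul_assoc (exp y), hconj]

section CAR
variable {R : Type*} [Ring R] [StarRing R] {ι : Type*} {a : ι → R}

theorem star_mul_star_eq_neg (hcar2 : ∀ i j, a i * a j + a j * a i = 0) (i j : ι) :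
    star (a i) * star (a j) = -(star (a j) * star (a i)) := by
  have h := congrArg star (hcar2 j i)
  rw [star_add, star_mul, star_mul, star_zero] at h
  exact eq_neg_of_add_eq_zero_left h

theorem commute_star_mul_star_mul [DecidableEq ι]
    (hcar1 : ∀ i j, a i * star (a j) + star (a j) * a i = if i = j then 1 else 0)
    (hcar2 : ∀ i j, a i * a j + a j * a i = 0) {i j k l : ι} (hjk : j ≠ k) (hil : i ≠ l) :
    Commute (star (a i) * a j) (star (a k) * a l) := by
  refine .mul_right (commute_mul_left_of_anticommute (star_mul_star_eq_neg hcar2 i k) ?_)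
    (commute_mul_left_of_anticommute ?_ (eq_neg_of_add_eq_zero_left (hcar2 j l)))
  · exact eq_neg_of_add_eq_zero_left (by simpa [hjk] using hcar1 j k)
  · exact eq_neg_of_add_eq_zero_right (by simpa [hil.symm] using hcar1 l i)

theorem number_mul_star [DecidableEq ι]
    (hcar1 : ∀ i j, a i * star (a j) + star (a j) * a i = if i = j then 1 else 0)
    (hcar2 : ∀ i j, a i * a j + a j * a i = 0) (k i : ι) :
    star (a k) * a k * star (a i) =
      star (a i) * (star (a k) * a k) + if k = i then star (a i) else 0 := by
  rw [mul_assoc, eq_sub_of_add_eq (hcar1 k i), mul_sub, ← mul_assoc,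
    star_mul_star_eq_neg hcar2 k i]
  rcases eq_or_ne k i with rfl | hki
  · simp only [if_true]; noncomm_ring
  · simp only [hki, if_false]; noncomm_ring

theorem number_mul [DecidableEq ι]
    (hcar1 : ∀ i j, a i * star (a j) + star (a j) * a i = if i = j then 1 else 0)
    (hcar2 : ∀ i j, a i * a j + a j * a i = 0) (k j : ι) :
    star (a k) * a k * a j = a j * (star (a k) * a k) - if k = j then a j else 0 := by
  rw [mul_assoc, eq_neg_of_add_eq_zero_left (hcar2 k j), mul_neg, ← mul_assoc,
    eq_sub_of_add_eq' (hcar1 j k)]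
  rcases eq_or_ne k j with rfl | hkj
  · simp only [if_true]; noncomm_ring
  · simp only [hkj, hkj.symm, if_false]; noncomm_ring

theorem number_mul_star_mul [DecidableEq ι]
    (hcar1 : ∀ i j, a i * star (a j) + star (a j) * a i = if i = j then 1 else 0)
    (hcar2 : ∀ i j, a i * a j + a j * a i = 0) (k i j : ι) :
    star (a k) * a k * (star (a i) * a j) = star (a i) * a j * (star (a k) * a k) +
      (if k = i then star (a i) * a j else 0) - if k = j then star (a i) * a j else 0 := by
  rw [← mul_assoc, number_mul_star hcar1 hcar2, add_mul, mul_assoc, number_mul hcar1 hcar2,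
    mul_sub, ite_mul, zero_mul, mul_ite, mul_zero, ← mul_assoc]
  abel

theorem commute_sum_number_star_mul [DecidableEq ι]
    (hcar1 : ∀ i j, a i * star (a j) + star (a j) * a i = if i = j then 1 else 0)
    (hcar2 : ∀ i j, a i * a j + a j * a i = 0) {s : Finset ι} {i j : ι} (hi : i ∈ s)
    (hj : j ∈ s) : Commute (∑ k ∈ s, star (a k) * a k) (star (a i) * a j) := by
  rw [Commute, SemiconjBy, Finset.sum_mul, Finset.mul_sum]
  simp only [number_mul_star_mul hcar1 hcar2, Finset.sum_sub_distrib, Finset.sum_add_distrib,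
    Finset.sum_ite_eq', hi, hj, if_true, add_sub_cancel_right]

end CAR

/-- If `H` commutes with the total number operator
`N = n₁+n₂+n₃+n₄`, then conjugation by `e^{-iθ(ñ₁+ñ₂)}` equals conjugation by
`U_x(θ/2)`, where `U_x(φ) = exp(iφ(a₁†a₃+a₃†a₁)) exp(iφ(a₂†a₄+a₄†a₂))` and
`ñ₁+ñ₂ = (N + a₁†a₃+a₃†a₁ + a₂†a₄+a₄†a₂)/2`. Modes 1,2,3,4 of the paper are
indexed by `0,1,2,3 : Fin 4`. -/
theorem conjugation_rotated_numbers_eq_Ux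
    {A : Type*} [NormedRing A] [StarRing A] [NormedAlgebra ℂ A] [CompleteSpace A]
    (a : Fin 4 → A)
    (hcar1 : ∀ i j, a i * star (a j) + star (a j) * a i = if i = j then 1 else 0)
    (hcar2 : ∀ i j, a i * a j + a j * a i = 0)
    (H : A)
    (hH : H * (star (a 0) * a 0 + star (a 1) * a 1 + star (a 2) * a 2 +
            star (a 3) * a 3) =
          (star (a 0) * a 0 + star (a 1) * a 1 + star (a 2) * a 2 +
            star (a 3) * a 3) * H)
    (θ : ℝ) :
    let N : A := star (a 0) * a 0 + star (a 1) * a 1 + star (a 2) * a 2 +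
      star (a 3) * a 3
    let S₁₃ : A := star (a 0) * a 2 + star (a 2) * a 0
    let S₂₄ : A := star (a 1) * a 3 + star (a 3) * a 1
    let M : A := (2 : ℂ)⁻¹ • (N + S₁₃ + S₂₄)
    NormedSpace.exp (((θ : ℂ) * Complex.I) • M) * H *
        NormedSpace.exp ((-((θ : ℂ) * Complex.I)) • M) =
      NormedSpace.exp ((((θ / 2 : ℝ) : ℂ) * Complex.I) • S₁₃) *
        NormedSpace.exp ((((θ / 2 : ℝ) : ℂ) * Complex.I) • S₂₄) * H *
        (NormedSpace.exp ((-(((θ / 2 : ℝ) : ℂ) * Complex.I)) • S₂₄) *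
          NormedSpace.exp ((-(((θ / 2 : ℝ) : ℂ) * Complex.I)) • S₁₃)) := by
  intro N S₁₃ S₂₄ M
  let _ : NormedAlgebra ℚ A := NormedAlgebra.restrictScalars ℚ ℂ A
  set c : ℂ := ((θ / 2 : ℝ) : ℂ) * Complex.I
  have hNS : ∀ i j, Commute N (star (a i) * a j) := fun i j => by
    simpa only [Fin.sum_univ_four] using
      commute_sum_number_star_mul hcar1 hcar2 (Finset.mem_univ i) (Finset.mem_univ j)
  have hN : Commute N (S₁₃ + S₂₄) :=
    ((hNS 0 2).add_right (hNS 2 0)).add_right ((hNS 1 3).add_right (hNS 3 1))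
  have hS : Commute S₁₃ S₂₄ :=
    .add_left (.add_right (commute_star_mul_star_mul hcar1 hcar2 (by decide) (by decide))
        (commute_star_mul_star_mul hcar1 hcar2 (by decide) (by decide)))
      (.add_right (commute_star_mul_star_mul hcar1 hcar2 (by decide) (by decide))
        (commute_star_mul_star_mul hcar1 hcar2 (by decide) (by decide)))
  have hM : ((θ : ℂ) * Complex.I) • M = c • N + c • (S₁₃ + S₂₄) := by
    have hc : (θ : ℂ) * Complex.I * 2⁻¹ = c := by simp only [c]; push_cast; ring
    simp only [M, smul_smul, hc, smul_add, add_assoc]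
  rw [neg_smul, hM, exp_add_mul_mul_exp_neg_add_of_commute ((hN.smul_left c).smul_right c)
      (Commute.smul_right hH c), smul_add, neg_add_rev, ← neg_smul, ← neg_smul,
    exp_add_of_commute ((hS.smul_left c).smul_right c),
    exp_add_of_commute ((hS.symm.smul_left (-c)).smul_right (-c))]
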